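/- Let W be an infinite word over the two-letter alphabet {a, b} that is not balanced. Then there exists a finite (possibly empty) word u over {a, b} such that both aua and bub are factors of W. -/

import Mathlib

/-!
Let `n` be the least length at which two factors `x`, `y` of `W` have `|x|_a ≥ |y|_a + 2`.
Cutting both at any interior position `p` and applying minimality to the two pieces shows that
the prefixes of length `p` (and the suffixes) differ in `a`-count by exactly one. At `p = 1` and
`p = n - 1` this forces `x` to start and end with `a` and `y` with `b`; for interior `p` the
count increments agree, so `x` and `y` coincide strictly inside: `x = aua` and `y = bub`.
-/

/-- The factor of the infinite word `W` of length `n` occurring at position `i`. -/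
def factorAt {A : Type*} (W : ℕ → A) (i n : ℕ) : List A :=
  (List.range n).map (fun j => W (i + j))

/-- `u` is a factor of the infinite word `W`. -/
def IsFactor {A : Type*} (W : ℕ → A) (u : List A) : Prop :=
  ∃ i : ℕ, u = factorAt W i u.length

/-- `W` is balanced: any two factors of equal length contain almost the same
number of occurrences of each letter. -/
def BalancedWord {A : Type*} [DecidableEq A] (W : ℕ → A) : Prop :=
  ∀ u v : List A, IsFactor W u → IsFactor W v → u.length = v.length →
    ∀ a : A, |(u.count a : ℤ) - (v.count a : ℤ)| ≤ 1

section Factors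

variable {A : Type*} (W : ℕ → A)

@[simp]
lemma length_factorAt (i n : ℕ) : (factorAt W i n).length = n := by
  simp [factorAt]

lemma factorAt_add (i m n : ℕ) :
    factorAt W i (m + n) = factorAt W i m ++ factorAt W (i + m) n := by
  simp [factorAt, List.range_add, Nat.add_assoc]

lemma factorAt_one (i : ℕ) : factorAt W i 1 = [W i] := by
  simp [factorAt]

lemma factorAt_congr {i j n : ℕ} (h : ∀ t < n, W (i + t) = W (j + t)) :
    factorAt W i n = factorAt W j n :=
  List.map_congr_left fun t ht => h t (List.mem_range.mp ht)

lemma isFactor_factorAt (i n : ℕ) : IsFactor W (factorAt W i n) :=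
  ⟨i, by rw [length_factorAt]⟩

end Factors

def weight (W : ℕ → Bool) (i n : ℕ) : ℕ :=
  (factorAt W i n).count true

section Weight

variable (W : ℕ → Bool)

lemma weight_add (i m n : ℕ) : weight W i (m + n) = weight W i m + weight W (i + m) n := by
  simp only [weight, factorAt_add, List.count_append]

lemma weight_one (i : ℕ) : weight W i 1 = (W i).toNat := by
  cases h : W i <;> simp [weight, factorAt_one, h]

lemma weight_le (i n : ℕ) : weight W i n ≤ n :=
  (List.count_le_length ..).trans_eq (length_factorAt W i n)

lemma exists_weight_add_two_le_of_not_balancedWord (h : ¬ BalancedWord W) :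
    ∃ n i j, weight W j n + 2 ≤ weight W i n := by
  simp only [BalancedWord, not_forall, not_le] at h
  obtain ⟨u, v, ⟨i, hu⟩, ⟨j, hv⟩, hlen, a, ha⟩ := h
  set n := u.length
  rw [hu, hv, ← hlen] at ha
  -- the count of `false` is `n` minus the weight, so an imbalance in `false` is one in `true`
  have hi := List.count_not_add_count (factorAt W i n) true
  have hj := List.count_not_add_count (factorAt W j n) true
  simp only [Bool.not_true, length_factorAt] at hi hj
  rcases lt_abs.mp ha with ha | ha <;> cases a
  exacts [⟨n, j, i, by simp only [weight]; omega⟩, ⟨n, i, j, by simp only [weight]; omega⟩,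
    ⟨n, i, j, by simp only [weight]; omega⟩, ⟨n, j, i, by simp only [weight]; omega⟩]

lemma exists_minimal_weight_gap (h : ∃ n i j, weight W j n + 2 ≤ weight W i n) :
    ∃ m i j, weight W j (m + 2) + 2 ≤ weight W i (m + 2) ∧
      ∀ k < m + 2, ∀ i' j', weight W i' k ≤ weight W j' k + 1 := by
  classical
  obtain ⟨i, j, hij⟩ := Nat.find_spec h
  have hmin : ∀ k < Nat.find h, ∀ i' j', weight W i' k ≤ weight W j' k + 1 := by
    intro k hk i' j'
    by_contra! hgap
    exact Nat.find_min h hk ⟨i', j', hgap⟩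
  obtain ⟨m, hm⟩ : ∃ m, Nat.find h = m + 2 :=
    ⟨Nat.find h - 2, by have := weight_le W i (Nat.find h); omega⟩
  exact ⟨m, i, j, hm ▸ hij, hm ▸ hmin⟩

end Weight

lemma Bool.eq_true_and_eq_false_of_toNat_eq_add_one {a b : Bool} (h : a.toNat = b.toNat + 1) :
    a = true ∧ b = false := by
  cases a <;> cases b <;> simp_all

section MinimalGap

variable {W : ℕ → Bool} {m i j : ℕ}
  (hmin : ∀ k < m + 2, ∀ i' j', weight W i' k ≤ weight W j' k + 1)
  (hgap : weight W j (m + 2) + 2 ≤ weight W i (m + 2))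
include hmin hgap

lemma weight_eq_add_one_of_minimal_gap {p q : ℕ} (hp : 0 < p) (hq : 0 < q) (hpq : p + q = m + 2) :
    weight W i p = weight W j p + 1 ∧ weight W (i + p) q = weight W (j + p) q + 1 := by
  have hi := weight_add W i p q
  have hj := weight_add W j p q
  have := hmin p (by omega) i j
  have := hmin q (by omega) (i + p) (j + p)
  rw [hpq] at hi hj
  omega

lemma head_eq_of_minimal_gap : W i = true ∧ W j = false :=
  Bool.eq_true_and_eq_false_of_toNat_eq_add_one <| by
    simpa only [weight_one] using
      (weight_eq_add_one_of_minimal_gap hmin hgap (p := 1) (q := m + 1) one_pos (by omega)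
        (by omega)).1

lemma getLast_eq_of_minimal_gap : W (i + (m + 1)) = true ∧ W (j + (m + 1)) = false :=
  Bool.eq_true_and_eq_false_of_toNat_eq_add_one <| by
    simpa only [weight_one] using
      (weight_eq_add_one_of_minimal_gap hmin hgap (p := m + 1) (q := 1) (by omega) one_pos
        (by omega)).2

lemma eq_of_minimal_gap {p : ℕ} (hp : 0 < p) (hpm : p ≤ m) : W (i + p) = W (j + p) := by
  have hp₀ := (weight_eq_add_one_of_minimal_gap hmin hgap (p := p) (q := m + 2 - p) hp
    (by omega) (by omega)).1
  have hp₁ := (weight_eq_add_one_of_minimal_gap hmin hgap (p := p + 1) (q := m + 1 - p)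
    (by omega) (by omega) (by omega)).1
  rw [weight_add, weight_one, weight_add, weight_one] at hp₁
  cases h : W (i + p) <;> cases h' : W (j + p) <;>
    simp only [h, h', Bool.toNat_true, Bool.toNat_false] at hp₁ <;> first | rfl | omega

lemma factorAt_eq_of_minimal_gap :
    factorAt W i (m + 2) = true :: factorAt W (i + 1) m ++ [true] ∧
      factorAt W j (m + 2) = false :: factorAt W (i + 1) m ++ [false] := by
  have hsplit (x : ℕ) :
      factorAt W x (m + 2) = W x :: factorAt W (x + 1) m ++ [W (x + (m + 1))] := by
    rw [show m + 2 = 1 + m + 1 by omega, factorAt_add, factorAt_add, factorAt_one, factorAt_one]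
    simp [Nat.add_comm 1 m]
  have hmid : factorAt W (j + 1) m = factorAt W (i + 1) m :=
    factorAt_congr W fun t ht => by
      simpa only [Nat.add_assoc, Nat.add_comm 1 t] using
        (eq_of_minimal_gap hmin hgap (p := t + 1) (by omega) (by omega)).symm
  obtain ⟨hi₀, hj₀⟩ := head_eq_of_minimal_gap hmin hgap
  obtain ⟨hi₁, hj₁⟩ := getLast_eq_of_minimal_gap hmin hgap
  rw [hsplit, hsplit, hmid, hi₀, hj₀, hi₁, hj₁]
  exact ⟨rfl, rfl⟩

end MinimalGap

-- `true` encodes the letter `a` and `false` the letter `b`.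
/-- If an infinite word over the two-letter alphabet `Bool` (`true = a`,
`false = b`) is not balanced, then for some finite word `u` both `aua` and `bub`
are factors of `W`. -/
theorem stmt7 (W : ℕ → Bool) (h : ¬ BalancedWord W) :
    ∃ u : List Bool,
      IsFactor W (true :: u ++ [true]) ∧ IsFactor W (false :: u ++ [false]) := by
  obtain ⟨m, i, j, hgap, hmin⟩ :=
    exists_minimal_weight_gap W (exists_weight_add_two_le_of_not_balancedWord W h)
  obtain ⟨hi, hj⟩ := factorAt_eq_of_minimal_gap hmin hgap
  exact ⟨factorAt W (i + 1) m, hi ▸ isFactor_factorAt W i _, hj ▸ isFactor_factorAt W j _⟩
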